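/- arXiv:gr-qc/0004045 — 2 statements merged into one kernel-verified Lean document; each statement's English description precedes it below -/
import Mathlib

section
/- Fix integers n ≥ 1 and N ≥ 1. Write A for the set of multi-indices α : {1,…,n} → {1,…,N}, M≤ ⊆ A for the subset of nondecreasing multi-indices, and M< ⊆ A for the subset of strictly increasing multi-indices. Given u : M≤ → ℝ and v : M< → ℝ, define φ : A → ℂ as follows: if α is not injective, φ(α) = u(α↑), where α↑ is the nondecreasing rearrangement of α; if α is injective, φ(α) = u(α↑) + i·sgn(σ_α)·v(α↑), where σ_α is the unique permutation of {1,…,n} with α = α↑ ∘ σ_α and sgn denotes the signature. Then for every J : A → ℝ one has the identity of complex numbers [∫_{ℝ^{M≤} × ℝ^{M<}} exp(−(1/2)·Σ_{α∈A} |φ(α)|² + Σ_{α∈A} φ(α)·J(α)) du dv] / [∫_{ℝ^{M≤} × ℝ^{M<}} exp(−(1/2)·Σ_{α∈A} |φ(α)|²) du dv] = exp((1/2)·Σ_{α,β∈A} J(α)·G(α,β)·J(β)), where the integrals are with respect to Lebesgue measure and G(α,β) = (2/n!)·Σ_{τ ∈ Sym({1,…,n}), sgn(τ) = −1} ∏_{i=1}^{n}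 𝟙[α(τ(i)) = β(i)]. -/
open MeasureTheory
open scoped Classical

noncomputable section

/-- The nondecreasing rearrangement of a multi-index `α : Fin n → Fin N`, as an
element of the set of nondecreasing multi-indices. -/
def sortedIdx {n N : ℕ} (α : Fin n → Fin N) : {α : Fin n → Fin N // Monotone α} :=
  ⟨α ∘ Tuple.sort α, Tuple.monotone_sort α⟩

/-- The strictly increasing rearrangement of an injective multi-index. -/
def sortedIdxStrict {n N : ℕ} (α : Fin n → Fin N) (h : Function.Injective α) :
    {α : Fin n → Fin N // StrictMono α} :=
  ⟨α ∘ Tuple.sort α,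
    (Tuple.monotone_sort α).strictMono_of_injective (h.comp (Equiv.injective _))⟩

/-- The complex tensor field `φ` built from its independent components: the real parts
`u` indexed by nondecreasing multi-indices and the imaginary parts `v` indexed by
strictly increasing multi-indices.  For `α` injective,
`φ(α) = u(α↑) + i·sgn(σ_α)·v(α↑)` where `σ_α = (Tuple.sort α)⁻¹` is the unique
permutation with `α = α↑ ∘ σ_α`; otherwise `φ(α) = u(α↑)`. -/
def phiField {n N : ℕ} (u : {α : Fin n → Fin N // Monotone α} → ℝ)
    (v : {α : Fin n → Fin N // StrictMono α} → ℝ) (α : Fin n → Fin N) : ℂ :=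
  if h : Function.Injective α then
    (u (sortedIdx α) : ℂ) +
      Complex.I * (((Equiv.Perm.sign (Tuple.sort α)⁻¹ : ℤˣ) : ℤ) : ℂ) *
        (v (sortedIdxStrict α h) : ℂ)
  else (u (sortedIdx α) : ℂ)

/-- The antisymmetrized propagator
`G(α,β) = (2/n!) · Σ_{τ odd} ∏ᵢ 𝟙[α(τ(i)) = β(i)]`. -/
def oddProp {n N : ℕ} (α β : Fin n → Fin N) : ℝ :=
  (2 / (n.factorial : ℝ)) *
    ∑ τ ∈ Finset.univ.filter (fun τ : Equiv.Perm (Fin n) => Equiv.Perm.sign τ = -1),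
      ∏ i : Fin n, if α (τ i) = β i then (1 : ℝ) else 0


/-!
Under the constraint, `φ` is diagonal in its independent components: the real part `u μ` fills
the `k_μ = #(sortFiber μ)` entries of the fibre of `μ`, and the imaginary part `v ν` fills the `n!`
entries `ν ∘ σ` with sign `sgn σ`. Hence the exponent is a sum of one-dimensional Gaussians,
`-(k_μ / 2) u_μ² + a_μ u_μ` and `-(n! / 2) v_ν² + i b_ν v_ν`, with `a_μ` the sum of `J` over the
fibre and `b_ν` its signed orbit sum, and the normalised integral is
`exp (∑ a_μ² / (2 k_μ) - ∑ b_ν² / (2 n!))`. Writing the sum over odd permutations as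
(all − signed) / 2, and noting that the orbit sum of `J` at `α` is `n! a_μ / k_μ` for `μ` the
sorted `α`, identifies this exponent with `½ J G J`.
-/

open Finset Complex
open scoped Real
open Equiv (Perm)

theorem integral_cexp_diagGaussian_div {ι : Type*} [Fintype ι] {k : ι → ℝ}
    (hk : ∀ i, 0 < k i) (c : ι → ℂ) :
    (∫ x : ι → ℝ, cexp (-(1 / 2 : ℂ) * ↑(∑ i, k i * x i ^ 2) + ∑ i, c i * x i)) /
        ∫ x : ι → ℝ, cexp (-(1 / 2 : ℂ) * ↑(∑ i, k i * x i ^ 2)) =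
      cexp (∑ i, c i ^ 2 / (2 * k i)) := by
  have hb : ∀ i, 0 < ((k i / 2 : ℝ) : ℂ).re := fun i => by simpa using hk i
  have hquad : ∀ x : ι → ℝ,
      -(1 / 2 : ℂ) * ↑(∑ i, k i * x i ^ 2) = -∑ i, ((k i / 2 : ℝ) : ℂ) * (x i : ℂ) ^ 2 := by
    intro x
    push_cast
    rw [mul_sum, ← sum_neg_distrib]
    exact sum_congr rfl fun i _ => by ring
  have hfree : ∀ x : ι → ℝ, -∑ i, ((k i / 2 : ℝ) : ℂ) * (x i : ℂ) ^ 2 =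
      -∑ i, ((k i / 2 : ℝ) : ℂ) * (x i : ℂ) ^ 2 + ∑ i, (0 : ℂ) * x i := by simp
  have hZ : ∀ i, (π / ((k i / 2 : ℝ) : ℂ)) ^ (1 / 2 : ℂ) ≠ 0 := fun i => by
    simp [cpow_eq_zero_iff, (hk i).ne']
  simp_rw [hquad]
  rw [GaussianFourier.integral_cexp_neg_sum_mul_add hb, funext fun x => congrArg cexp (hfree x),
    GaussianFourier.integral_cexp_neg_sum_mul_add hb, exp_sum, ← prod_div_distrib]
  refine prod_congr rfl fun i _ => ?_
  rw [zero_pow two_ne_zero, zero_div, exp_zero, mul_one, mul_div_cancel_left₀ _ (hZ i)]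
  congr 1
  push_cast
  ring

theorem integral_prod_cexp_diagGaussian_div {ι κ : Type*} [Fintype ι] [Fintype κ]
    {k : ι → ℝ} {l : κ → ℝ} (hk : ∀ i, 0 < k i) (hl : ∀ j, 0 < l j) (c : ι → ℂ) (d : κ → ℂ) :
    (∫ p : (ι → ℝ) × (κ → ℝ), cexp (-(1 / 2 : ℂ) *
        ↑(∑ i, k i * p.1 i ^ 2 + ∑ j, l j * p.2 j ^ 2) + (∑ i, c i * p.1 i + ∑ j, d j * p.2 j))) /
        ∫ p : (ι → ℝ) × (κ → ℝ),
          cexp (-(1 / 2 : ℂ) * ↑(∑ i, k i * p.1 i ^ 2 + ∑ j, l j * p.2 j ^ 2)) =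
      cexp (∑ i, c i ^ 2 / (2 * k i) + ∑ j, d j ^ 2 / (2 * l j)) := by
  have e := volume_measurePreserving_sumPiEquivProdPi (fun _ : ι ⊕ κ => ℝ)
  rw [← e.integral_comp', ← e.integral_comp']
  convert integral_cexp_diagGaussian_div (k := Sum.elim k l) (Sum.rec hk hl)
    (Sum.elim c d) using 1 <;>
    simp [MeasurableEquiv.coe_sumPiEquivProdPi, Fintype.sum_sum_type]

theorem Equiv.Perm.sum_filter_sign_eq_neg_one {ι R : Type*} [Fintype ι] [DecidableEq ι]
    [Field R] [CharZero R] (f : Perm ι → R) :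
    ∑ τ with Perm.sign τ = -1, f τ = (∑ τ, f τ - ∑ τ, ((Perm.sign τ : ℤ) : R) * f τ) / 2 := by
  rw [sum_filter, eq_div_iff two_ne_zero, ← sum_sub_distrib, sum_mul]
  refine sum_congr rfl fun τ _ => ?_
  rcases Int.units_eq_one_or (Perm.sign τ) with h | h <;> simp [h]; ring

section

variable {n N : ℕ}

section Sorting

theorem sortedIdx_coe (μ : {α : Fin n → Fin N // Monotone α}) : sortedIdx μ.1 = μ := by
  ext1
  simp [sortedIdx, Tuple.sort_eq_refl_iff_monotone.mpr μ.2]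

theorem sortedIdx_comp_perm (α : Fin n → Fin N) (σ : Perm (Fin n)) :
    sortedIdx (α ∘ σ) = sortedIdx α :=
  Subtype.ext Tuple.comp_perm_comp_sort_eq_comp_sort

theorem coe_sortedIdx_comp_sort_inv (α : Fin n → Fin N) :
    (sortedIdx α).1 ∘ ⇑(Tuple.sort α)⁻¹ = α := by
  ext1 i
  simp [sortedIdx]

theorem exists_perm_of_sortedIdx_eq {α β : Fin n → Fin N} (h : sortedIdx β = sortedIdx α) :
    ∃ ρ : Perm (Fin n), β = α ∘ ρ :=
  ⟨Tuple.sort α * (Tuple.sort β)⁻¹, by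
    conv_lhs => rw [← coe_sortedIdx_comp_sort_inv β, h]
    rfl⟩

theorem Tuple.sort_strictMono_comp (ν : {α : Fin n → Fin N // StrictMono α}) (σ : Perm (Fin n)) :
    Tuple.sort (ν.1 ∘ σ) = σ⁻¹ := by
  have h := congrArg Subtype.val (sortedIdx_comp_perm ν.1 σ)
  rw [sortedIdx_coe ⟨ν.1, ν.2.monotone⟩] at h
  ext1 i
  rw [eq_comm, Perm.inv_eq_iff_eq]
  exact ν.2.injective (congrFun h i).symm

theorem sortedIdxStrict_comp (ν : {α : Fin n → Fin N // StrictMono α}) (σ : Perm (Fin n))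
    (h : Function.Injective (ν.1 ∘ σ)) : sortedIdxStrict (ν.1 ∘ σ) h = ν :=
  Subtype.ext (congrArg Subtype.val <|
    (sortedIdx_comp_perm ν.1 σ).trans (sortedIdx_coe ⟨ν.1, ν.2.monotone⟩) :)

end Sorting

section Fibers

def sortFiber (μ : {α : Fin n → Fin N // Monotone α}) : Finset (Fin n → Fin N) :=
  {α | sortedIdx α = μ}

theorem sum_sortFiber {M : Type*} [AddCommMonoid M] (f : (Fin n → Fin N) → M) :
    ∑ μ, ∑ α ∈ sortFiber μ, f α = ∑ α, f α :=
  sum_fiberwise univ sortedIdx f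

theorem sum_mul_sortedIdx {R : Type*} [NonUnitalNonAssocSemiring R]
    (g : {α : Fin n → Fin N // Monotone α} → R) (f : (Fin n → Fin N) → R) :
    ∑ α, g (sortedIdx α) * f α = ∑ μ, g μ * ∑ α ∈ sortFiber μ, f α := by
  rw [← sum_sortFiber]
  refine sum_congr rfl fun μ _ => ?_
  rw [mul_sum]
  refine sum_congr rfl fun α hα => ?_
  rw [(mem_filter.1 hα).2]

theorem card_sortFiber_pos (μ : {α : Fin n → Fin N // Monotone α}) : 0 < #(sortFiber μ) :=
  card_pos.2 ⟨μ.1, mem_filter.2 ⟨mem_univ _, sortedIdx_coe μ⟩⟩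

theorem sum_sortFiber_comp_perm {M : Type*} [AddCommMonoid M]
    (μ : {α : Fin n → Fin N // Monotone α}) (σ : Perm (Fin n)) (f : (Fin n → Fin N) → M) :
    ∑ α ∈ sortFiber μ, f (α ∘ σ) = ∑ α ∈ sortFiber μ, f α := by
  refine sum_nbij' (· ∘ σ) (· ∘ ⇑σ⁻¹) ?_ ?_ ?_ ?_ fun _ _ => rfl <;>
    simp [sortFiber, sortedIdx_comp_perm, Function.comp_assoc]

def injectiveEquivStrictMonoProdPerm :
    {α : Fin n → Fin N // Function.Injective α} ≃
      {α : Fin n → Fin N // StrictMono α} × Perm (Fin n) where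
  toFun α := (sortedIdxStrict α.1 α.2, (Tuple.sort α.1)⁻¹)
  invFun p := ⟨p.1.1 ∘ p.2, p.1.2.injective.comp p.2.injective⟩
  left_inv α := Subtype.ext (coe_sortedIdx_comp_sort_inv α.1)
  right_inv p := Prod.ext (sortedIdxStrict_comp _ _ (p.1.2.injective.comp p.2.injective))
    (by simp [Tuple.sort_strictMono_comp])

theorem sum_eq_sum_strictMono_perm {M : Type*} [AddCommMonoid M] {f : (Fin n → Fin N) → M}
    (hf : ∀ α, ¬ Function.Injective α → f α = 0) :
    ∑ α, f α = ∑ ν : {α : Fin n → Fin N // StrictMono α}, ∑ σ : Perm (Fin n), f (ν.1 ∘ σ) := by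
  rw [← sum_filter_of_ne fun α _ h => not_not.1 (mt (hf α) h),
    sum_subtype _ (p := Function.Injective) (fun _ => by simp), ← Fintype.sum_prod_type']
  exact (Fintype.sum_equiv injectiveEquivStrictMonoProdPerm.symm _ _ fun _ => rfl).symm

end Fibers

section OrbitSums

variable (J : (Fin n → Fin N) → ℝ)

def fiberSum (μ : {α : Fin n → Fin N // Monotone α}) : ℝ :=
  ∑ α ∈ sortFiber μ, J α

def orbitSum (α : Fin n → Fin N) : ℝ :=
  ∑ σ : Perm (Fin n), J (α ∘ σ)

def signedOrbitSum (α : Fin n → Fin N) : ℝ :=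
  ∑ σ : Perm (Fin n), (Perm.sign σ : ℤ) * J (α ∘ σ)

theorem orbitSum_comp_perm (α : Fin n → Fin N) (ρ : Perm (Fin n)) :
    orbitSum J (α ∘ ρ) = orbitSum J α :=
  Equiv.sum_comp (Equiv.mulLeft ρ) fun σ => J (α ∘ σ)

theorem signedOrbitSum_comp_perm (α : Fin n → Fin N) (ρ : Perm (Fin n)) :
    signedOrbitSum J (α ∘ ρ) = (Perm.sign ρ : ℤ) * signedOrbitSum J α := by
  have hsq : ((Perm.sign ρ : ℤ) : ℝ) * (Perm.sign ρ : ℤ) = 1 := by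
    exact_mod_cast Int.units_coe_mul_self _
  rw [signedOrbitSum, signedOrbitSum, mul_sum,
    ← Equiv.sum_comp (Equiv.mulLeft ρ)
      fun σ => ((Perm.sign ρ : ℤ) : ℝ) * (((Perm.sign σ : ℤ) : ℝ) * J (α ∘ σ))]
  refine sum_congr rfl fun σ _ => ?_
  rw [Equiv.coe_mulLeft, Perm.sign_mul, Units.val_mul, Int.cast_mul,
    show α ∘ ⇑(ρ * σ) = (α ∘ ρ) ∘ σ from rfl]
  linear_combination (-(((Perm.sign σ : ℤ) : ℝ) * J ((α ∘ ρ) ∘ σ))) * hsq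

theorem signedOrbitSum_eq_zero {α : Fin n → Fin N} (h : ¬ Function.Injective α) :
    signedOrbitSum J α = 0 := by
  obtain ⟨i, j, hij, hne⟩ := Function.not_injective_iff.1 h
  have hswap : α ∘ Equiv.swap i j = α := by
    ext1 k
    rcases eq_or_ne k i with rfl | hki
    · simp [hij]
    rcases eq_or_ne k j with rfl | hkj
    · simp [hij]
    · simp [Equiv.swap_apply_of_ne_of_ne hki hkj]
  have := signedOrbitSum_comp_perm J α (Equiv.swap i j)
  rw [hswap, Perm.sign_swap hne] at this
  push_cast at this
  linarith

theorem card_sortFiber_mul_orbitSum (α : Fin n → Fin N) :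
    #(sortFiber (sortedIdx α)) * orbitSum J α = n.factorial * fiberSum J (sortedIdx α) := by
  have hconst : ∀ β ∈ sortFiber (sortedIdx α), orbitSum J β = orbitSum J α := fun β hβ => by
    obtain ⟨ρ, rfl⟩ := exists_perm_of_sortedIdx_eq (mem_filter.1 hβ).2
    exact orbitSum_comp_perm J α ρ
  calc (#(sortFiber (sortedIdx α)) : ℝ) * orbitSum J α
      = ∑ β ∈ sortFiber (sortedIdx α), orbitSum J β := by
        rw [sum_congr rfl hconst, sum_const, nsmul_eq_mul]
    _ = ∑ σ : Perm (Fin n), ∑ β ∈ sortFiber (sortedIdx α), J (β ∘ σ) := sum_comm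
    _ = n.factorial * fiberSum J (sortedIdx α) := by
        simp_rw [sum_sortFiber_comp_perm]
        rw [sum_const, card_univ, Fintype.card_perm, Fintype.card_fin, nsmul_eq_mul, fiberSum]

theorem sum_mul_orbitSum :
    ∑ α, J α * orbitSum J α =
      n.factorial * ∑ μ, fiberSum J μ ^ 2 / #(sortFiber μ) := by
  have hk : ∀ α : Fin n → Fin N, (#(sortFiber (sortedIdx α)) : ℝ) ≠ 0 := fun α => by
    exact_mod_cast (card_sortFiber_pos _).ne'
  calc ∑ α, J α * orbitSum J α
      = ∑ α, (n.factorial * fiberSum J (sortedIdx α) / #(sortFiber (sortedIdx α))) * J α := by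
        refine sum_congr rfl fun α _ => ?_
        rw [← card_sortFiber_mul_orbitSum, mul_div_cancel_left₀ _ (hk α), mul_comm]
    _ = n.factorial * ∑ μ, fiberSum J μ ^ 2 / #(sortFiber μ) := by
        rw [sum_mul_sortedIdx (fun μ => n.factorial * fiberSum J μ / #(sortFiber μ)), mul_sum]
        refine sum_congr rfl fun μ _ => ?_
        rw [← fiberSum]
        ring

theorem sum_mul_signedOrbitSum :
    ∑ α, J α * signedOrbitSum J α =
      ∑ ν : {α : Fin n → Fin N // StrictMono α}, signedOrbitSum J ν.1 ^ 2 := by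
  rw [sum_eq_sum_strictMono_perm fun α h => by rw [signedOrbitSum_eq_zero J h, mul_zero]]
  refine sum_congr rfl fun ν _ => ?_
  simp_rw [signedOrbitSum_comp_perm]
  rw [sq, signedOrbitSum, sum_mul]
  exact sum_congr rfl fun σ _ => by ring

end OrbitSums

theorem sum_oddProp_mul (J : (Fin n → Fin N) → ℝ) (α : Fin n → Fin N) :
    ∑ β, oddProp α β * J β = (orbitSum J α - signedOrbitSum J α) / n.factorial := by
  have hdelta : ∀ (τ : Perm (Fin n)) β,
      (∏ i, if α (τ i) = β i then (1 : ℝ) else 0) = if α ∘ τ = β then 1 else 0 := fun τ β => by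
    simp [prod_boole, funext_iff]
  simp_rw [oddProp, hdelta, mul_assoc, ← mul_sum, sum_mul, ite_mul, one_mul, zero_mul]
  rw [sum_comm]
  simp only [sum_ite_eq, mem_univ, if_true]
  rw [Perm.sum_filter_sign_eq_neg_one, orbitSum, signedOrbitSum]
  ring

theorem half_sum_mul_oddProp_mul (J : (Fin n → Fin N) → ℝ) :
    (1 / 2 : ℝ) * ∑ α, ∑ β, J α * oddProp α β * J β =
      ∑ μ, fiberSum J μ ^ 2 / (2 * #(sortFiber μ)) -
        ∑ ν : {α : Fin n → Fin N // StrictMono α},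
          signedOrbitSum J ν.1 ^ 2 / (2 * n.factorial) := by
  have hfact : (n.factorial : ℝ) ≠ 0 := by positivity
  simp_rw [mul_assoc, ← mul_sum, sum_oddProp_mul, mul_div_assoc', mul_sub, ← sum_div,
    sum_sub_distrib, sum_mul_orbitSum, sum_mul_signedOrbitSum]
  rw [sub_div, mul_div_cancel_left₀ _ hfact, mul_sub, mul_sum]
  congr 1
  · exact sum_congr rfl fun μ _ => by ring
  · ring

section Field

variable (u : {α : Fin n → Fin N // Monotone α} → ℝ) (v : {α : Fin n → Fin N // StrictMono α} → ℝ)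

theorem re_phiField (α : Fin n → Fin N) : (phiField u v α).re = u (sortedIdx α) := by
  unfold phiField
  split_ifs <;> simp

theorem im_phiField_of_not_injective {α : Fin n → Fin N} (h : ¬ Function.Injective α) :
    (phiField u v α).im = 0 := by
  simp [phiField, h]

theorem im_phiField_strictMono_comp (ν : {α : Fin n → Fin N // StrictMono α}) (σ : Perm (Fin n)) :
    (phiField u v (ν.1 ∘ σ)).im = (Perm.sign σ : ℤ) * v ν := by
  have h : Function.Injective (ν.1 ∘ σ) := ν.2.injective.comp σ.injective
  simp [phiField, h, sortedIdxStrict_comp, Tuple.sort_strictMono_comp]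

theorem sum_norm_phiField_sq :
    ∑ α, ‖phiField u v α‖ ^ 2 =
      ∑ μ, #(sortFiber μ) * u μ ^ 2 + ∑ ν, (n.factorial : ℝ) * v ν ^ 2 := by
  simp_rw [Complex.sq_norm, normSq_apply, sum_add_distrib, re_phiField]
  congr 1
  · simpa [mul_comm, sq] using sum_mul_sortedIdx (fun μ => u μ * u μ) 1
  · rw [sum_eq_sum_strictMono_perm fun α h => by simp [im_phiField_of_not_injective u v h]]
    refine sum_congr rfl fun ν _ => ?_
    simp [im_phiField_strictMono_comp, ← sq, mul_pow, ← Int.cast_pow, ← Units.val_pow_eq_pow_val,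
      Int.units_sq, Fintype.card_perm]

theorem sum_phiField_mul (J : (Fin n → Fin N) → ℝ) :
    ∑ α, phiField u v α * J α =
      ∑ μ, (fiberSum J μ : ℂ) * u μ + ∑ ν, (I * signedOrbitSum J ν.1) * v ν := by
  have hre : ∑ α, (phiField u v α).re * J α = ∑ μ, fiberSum J μ * u μ := by
    simp_rw [re_phiField, sum_mul_sortedIdx u J, fiberSum, mul_comm]
  have him : ∑ α, (phiField u v α).im * J α = ∑ ν, signedOrbitSum J ν.1 * v ν := by
    rw [sum_eq_sum_strictMono_perm fun α h => by simp [im_phiField_of_not_injective u v h]]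
    refine sum_congr rfl fun ν _ => ?_
    simp_rw [im_phiField_strictMono_comp, signedOrbitSum, sum_mul]
    exact sum_congr rfl fun σ _ => by ring
  calc ∑ α, phiField u v α * J α
      = ((∑ α, (phiField u v α).re * J α : ℝ) : ℂ) +
          I * ((∑ α, (phiField u v α).im * J α : ℝ) : ℂ) := by
        push_cast
        rw [mul_sum, ← sum_add_distrib]
        refine sum_congr rfl fun α _ => ?_
        conv_lhs => rw [← re_add_im (phiField u v α)]
        ring
    _ = _ := by
        rw [hre, him]
        push_cast
        rw [mul_sum]
        simp_rw [mul_assoc]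

end Field

end

theorem complex_free_partition_function_general (n N : ℕ)
    (J : (Fin n → Fin N) → ℝ) :
    (∫ p : ({α : Fin n → Fin N // Monotone α} → ℝ) ×
           ({α : Fin n → Fin N // StrictMono α} → ℝ),
        Complex.exp (-(1/2 : ℂ) * ∑ α : Fin n → Fin N,
            ((‖phiField p.1 p.2 α‖ : ℝ) : ℂ) ^ 2
          + ∑ α : Fin n → Fin N, phiField p.1 p.2 α * (J α : ℂ))) /
    (∫ p : ({α : Fin n → Fin N // Monotone α} → ℝ) ×
           ({α : Fin n → Fin N // StrictMono α} → ℝ),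
        Complex.exp (-(1/2 : ℂ) * ∑ α : Fin n → Fin N,
            ((‖phiField p.1 p.2 α‖ : ℝ) : ℂ) ^ 2)) =
    Complex.exp ((1/2 : ℂ) * ∑ α : Fin n → Fin N, ∑ β : Fin n → Fin N,
        ((J α : ℂ) * (oddProp α β : ℂ) * (J β : ℂ))) := by
  have hquad : ∀ p : ({α : Fin n → Fin N // Monotone α} → ℝ) ×
      ({α : Fin n → Fin N // StrictMono α} → ℝ),
      ∑ α, ((‖phiField p.1 p.2 α‖ : ℝ) : ℂ) ^ 2 =
        ((∑ μ, #(sortFiber μ) * p.1 μ ^ 2 + ∑ ν, (n.factorial : ℝ) * p.2 ν ^ 2 : ℝ) : ℂ) :=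
    fun p => by rw [← sum_norm_phiField_sq]; push_cast; rfl
  simp_rw [hquad, sum_phiField_mul]
  rw [integral_prod_cexp_diagGaussian_div (fun μ => by exact_mod_cast card_sortFiber_pos μ)
    (fun _ => by positivity)]
  have hsource : (1 / 2 : ℂ) * ∑ α, ∑ β, (J α : ℂ) * (oddProp α β : ℂ) * (J β : ℂ) =
      ((1 / 2 * ∑ α, ∑ β, J α * oddProp α β * J β : ℝ) : ℂ) := by push_cast; rfl
  rw [hsource, half_sum_mul_oddProp_mul]
  push_cast
  simp [mul_pow, sub_eq_add_neg, neg_div]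

/-- Complex case of Proposition 1 (GM:rel): the free partition function of the rank-`n`
generalized matrix model whose complex tensor field has fully symmetric real part and
fully antisymmetric imaginary part, in presence of a real source `J`, equals
`exp((1/2)·J G J)` with propagator `G = (2/n!)·Σ_{τ odd} ∏ᵢ δ_{α(τ(i)) β(i)}`. -/
theorem complex_free_partition_function (n N : ℕ) (hn : 1 ≤ n) (hN : 1 ≤ N)
    (J : (Fin n → Fin N) → ℝ) :
    (∫ p : ({α : Fin n → Fin N // Monotone α} → ℝ) ×
           ({α : Fin n → Fin N // StrictMono α} → ℝ),
        Complex.exp (-(1/2 : ℂ) * ∑ α : Fin n → Fin N,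
            ((‖phiField p.1 p.2 α‖ : ℝ) : ℂ) ^ 2
          + ∑ α : Fin n → Fin N, phiField p.1 p.2 α * (J α : ℂ))) /
    (∫ p : ({α : Fin n → Fin N // Monotone α} → ℝ) ×
           ({α : Fin n → Fin N // StrictMono α} → ℝ),
        Complex.exp (-(1/2 : ℂ) * ∑ α : Fin n → Fin N,
            ((‖phiField p.1 p.2 α‖ : ℝ) : ℂ) ^ 2)) =
    Complex.exp ((1/2 : ℂ) * ∑ α : Fin n → Fin N, ∑ β : Fin n → Fin N,
        ((J α : ℂ) * (oddProp α β : ℂ) * (J β : ℂ))) :=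
  complex_free_partition_function_general n N J
end
end

section
/- Let n = 4. A glueing datum of dimension n consists of: a finite nonempty index set I (indexing copies Δ_i of the standard n-simplex, realized as {x : {0,…,n} → [0,∞) | Σ_v x_v = 1}, with vertices labeled 0,…,n); a fixed-point-free involution P of the set I × {0,…,n} of codimension-1 faces, where (i,k) denotes the face {x ∈ Δ_i | x_k = 0}; and, for each face (i,k) with P(i,k) = (j,l), a bijection φ_{(i,k)} : {0,…,n}∖{k} → {0,…,n}∖{l}, subject to φ_{(j,l)} = φ_{(i,k)}⁻¹. A cycle around a triangle is the data of m ≥ 1, indices i_0,…,i_m ∈ I, injections t_0,…,t_m : {0,1,2} → {0,…,4}, and for each 0 ≤ r < m a choice k_r ∈ {0,…,4} with k_r ∉ image(t_r), such that P(i_r,k_r) = (i_{r+1}, l_{r+1}) for some l_{r+1} and t_{r+1} = φ_{(i_r,k_r)} ∘ t_r, such that k_r ≠ l_r for all 0 < r < m, and such that i_m = i_0, image(t_m) = image(t_0) and l_m ≠ k_0. Suppose condition Ori holds: there exists ε : I → {+1,−1} such that for every face (i,k) with P(i,k) = (j,l) one has ε(i)·(−1)^k·sgn(φ_{(i,k)})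 = −ε(j)·(−1)^l, where sgn(φ_{(i,k)}) is the signature of the permutation of {1,…,n} obtained by conjugating φ_{(i,k)} with the order-preserving bijections {0,…,n}∖{k} → {1,…,n} and {0,…,n}∖{l} → {1,…,n}. Then for every cycle around a triangle, the permutation t_0⁻¹ ∘ t_m of {0,1,2} is even. -/
open scoped Classical

noncomputable section

/-- A glueing datum of dimension `n`: a finite nonempty set `I` indexing copies of the
standard `n`-simplex, a fixed-point-free involution `P` of the set `I × Fin (n+1)` of
codimension-1 faces (the face `(i,k)` of the `i`-th simplex being opposite to the vertex
`k`), and for each face `(i,k)` with `P (i,k) = (j,l)` a simplicial identification,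
encoded as a permutation `glue (i,k)` of the vertex labels sending `k` to `l` (its
restriction to `{0,…,n} \ {k}` is the bijection `φ_{(i,k)}` onto `{0,…,n} \ {l}`),
subject to `φ_{P f} = (φ f)⁻¹`. -/
structure GlueingDatum (n : ℕ) where
  I : Type
  fintypeI : Fintype I
  nonemptyI : Nonempty I
  P : I × Fin (n + 1) → I × Fin (n + 1)
  P_involutive : ∀ f, P (P f) = f
  P_fixedPointFree : ∀ f, P f ≠ f
  glue : I × Fin (n + 1) → Equiv.Perm (Fin (n + 1))
  glue_face : ∀ f, glue f f.2 = (P f).2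
  glue_symm : ∀ f, glue (P f) = (glue f).symm

/-- The permutation of `Fin n` obtained from a permutation `e` of `Fin (n+1)` by
deleting `k` from the source and `e k` from the target, conjugating by the
order-preserving bijections `{0,…,n} \ {k} ≃ {1,…,n}` and `{0,…,n} \ {e k} ≃ {1,…,n}`. -/
def restrictPerm {n : ℕ} (e : Equiv.Perm (Fin (n + 1))) (k : Fin (n + 1)) :
    Equiv.Perm (Fin n) :=
  (finSuccAboveEquiv k).trans
    ((e.subtypeEquiv (fun _ => (not_congr e.apply_eq_iff_eq).symm)).trans
      (finSuccAboveEquiv (e k)).symm)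

/-- The signature of the face-pairing `e` at the face opposite to `k`. -/
def glueSign {n : ℕ} (e : Equiv.Perm (Fin (n + 1))) (k : Fin (n + 1)) : ℤˣ :=
  Equiv.Perm.sign (restrictPerm e k)

/-- Condition Ori: the simplices can be given signs so that every face-pairing
reverses the induced orientation. -/
def Ori {n : ℕ} (D : GlueingDatum n) : Prop :=
  ∃ ε : D.I → ℤˣ, ∀ (i : D.I) (k : Fin (n + 1)),
    ε i * (-1) ^ (k : ℕ) * glueSign (D.glue (i, k)) k
      = -(ε (D.P (i, k)).1 * (-1) ^ (((D.P (i, k)).2 : Fin (n + 1)) : ℕ))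

/-- Condition Dir: the edges of the simplices can be directed compatibly with all the
face-pairings. -/
def Dir {n : ℕ} (D : GlueingDatum n) : Prop :=
  ∃ o : D.I → Fin (n + 1) → Fin (n + 1) → Prop,
    (∀ i a b, a ≠ b → Xor' (o i a b) (o i b a)) ∧
    (∀ (i : D.I) (k a b : Fin (n + 1)), a ≠ k → b ≠ k → a ≠ b →
      (o i a b ↔ o (D.P (i, k)).1 (D.glue (i, k) a) (D.glue (i, k) b)))


/-! Under Ori every face-pairing, as a permutation of the vertex labels, has sign `-ε(i) ε(j)`:
the signature of the restricted bijection differs from it by `(-1)^(k+l)`. Along the cycle, list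
the vertices of `Δ_{i_r}` as the triangle `t_r`, then `k_r`, then `l_r`. The glueing map sends
this frame to the frame of the next simplex with its last two entries swapped, since it sends
`k_r` to `l_{r+1}` and so, being a bijection, `l_r` to `k_{r+1}`. Hence `ε(i_r) · sign(frame_r)`
is constant along the cycle; as `i_m = i_0` and the last two entries of the first and last frames
agree, these two frames differ exactly by the return permutation, which is therefore even. -/

open Equiv Function

section restrictPerm

variable {n : ℕ}

theorem succAbove_restrictPerm (e : Perm (Fin (n + 1))) (k : Fin (n + 1)) (x : Fin n) :
    (e k).succAbove (restrictPerm e k x) = e (k.succAbove x) := by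
  simp only [restrictPerm, Equiv.trans_apply, finSuccAboveEquiv_apply, Equiv.subtypeEquiv_apply]
  exact congrArg Subtype.val ((finSuccAboveEquiv (e k)).apply_symm_apply ⟨e (k.succAbove x), _⟩)

theorem cycleRange_mul_mul_inv_cycleRange (e : Perm (Fin (n + 1))) (k : Fin (n + 1)) :
    (e k).cycleRange * e * k.cycleRange⁻¹ = Perm.decomposeFin.symm (0, restrictPerm e k) := by
  ext x : 1
  refine Fin.cases ?_ (fun j => ?_) x
  · simp
  · simp [← succAbove_restrictPerm e k j]

theorem sign_restrictPerm (e : Perm (Fin (n + 1))) (k : Fin (n + 1)) :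
    Perm.sign (restrictPerm e k) = Perm.sign e * (-1) ^ ((k : ℕ) + (e k : ℕ)) := by
  have h := congrArg Perm.sign (cycleRange_mul_mul_inv_cycleRange e k)
  rw [map_mul, map_mul, map_inv, Fin.sign_cycleRange, Fin.sign_cycleRange,
    Perm.decomposeFin.symm_sign, if_pos rfl, one_mul] at h
  rw [← h, Int.units_inv_eq_self, pow_add]
  ac_rfl

end restrictPerm

theorem Ori.exists_sign_glue {n : ℕ} {D : GlueingDatum n} (h : Ori D) :
    ∃ ε : D.I → ℤˣ, ∀ f, Perm.sign (D.glue f) = -(ε f.1 * ε (D.P f).1) := by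
  obtain ⟨ε, hε⟩ := h
  refine ⟨ε, fun ⟨i, k⟩ => ?_⟩
  have h := hε i k
  rw [glueSign, sign_restrictPerm, D.glue_face, pow_add] at h
  have h₁ := Int.units_mul_self (ε i)
  have h₂ := Int.units_mul_self ((-1 : ℤˣ) ^ (k : ℕ))
  have h₃ := Int.units_mul_self ((-1 : ℤˣ) ^ ((D.P (i, k)).2 : ℕ))
  rw [Units.ext_iff] at h h₁ h₂ h₃ ⊢
  push_cast at h h₁ h₂ h₃ ⊢
  grind

theorem Equiv.ext_of_forall_ne {α β : Type*} {e₁ e₂ : α ≃ β} (x : α)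
    (h : ∀ y, y ≠ x → e₁ y = e₂ y) : e₁ = e₂ := by
  ext y
  by_cases hy : y = x
  · subst hy
    by_contra hne
    -- otherwise `e₁` and `e₂` would both send the point `e₂⁻¹ (e₁ y) ≠ y` to `e₁ y`
    have hz : e₂.symm (e₁ y) ≠ y := fun hz => hne (e₂.symm_apply_eq.1 hz)
    exact hz (e₁.injective (by rw [h _ hz, apply_symm_apply]))
  · exact h y hy

theorem exists_perm_eq_comp_of_range_eq {α β : Type*} {f g : α → β} (hf : Injective f)
    (hg : Injective g) (h : Set.range f = Set.range g) : ∃ σ : Perm α, f = g ∘ σ :=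
  ⟨(ofInjective f hf).trans ((setCongr h).trans (ofInjective g hg).symm),
    funext fun a => by simp [apply_ofInjective_symm]⟩

theorem Fin.append_pair_injective {α : Type*} {q : ℕ} {u : Fin q → α} {a b : α}
    (hu : Injective u) (ha : a ∉ Set.range u) (hb : b ∉ Set.range u) (hab : a ≠ b) :
    Injective (Fin.append u ![a, b]) := by
  refine Fin.append_injective_iff.2 ⟨hu, ?_, fun x y => ?_⟩
  · intro x y
    fin_cases x <;> fin_cases y <;> simp [hab, hab.symm]
  · fin_cases y
    exacts [fun h => ha ⟨x, h⟩, fun h => hb ⟨x, h⟩]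

theorem sign_eq_sign_mul_sign_of_coe_eq_append {p q : ℕ} {τ τ' : Perm (Fin (p + q))}
    {u : Fin p → Fin (p + q)} {v : Fin q → Fin (p + q)} {σ : Perm (Fin p)}
    (hτ : ⇑τ = Fin.append u v) (hτ' : ⇑τ' = Fin.append (u ∘ σ) v) :
    Perm.sign τ' = Perm.sign τ * Perm.sign σ := by
  have : τ' = τ * finSumFinEquiv.permCongr (σ.sumCongr 1) := by
    ext x : 1
    refine Fin.addCases (fun j => ?_) (fun j => ?_) x <;> simp [hτ, hτ']
  rw [this, map_mul, Perm.sign_permCongr, Perm.sign_sumCongr, map_one, mul_one]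

theorem mul_eq_mul_swap_of_coe_eq_append {q : ℕ} {e τ τ' : Perm (Fin (q + 2))}
    {u : Fin q → Fin (q + 2)} {a b a' b' : Fin (q + 2)}
    (hτ : ⇑τ = Fin.append u ![a, b]) (hτ' : ⇑τ' = Fin.append (e ∘ u) ![a', b'])
    (ha : e a = b') : e * τ = τ' * Equiv.swap (Fin.natAdd q 0) (Fin.natAdd q 1) := by
  refine Equiv.ext_of_forall_ne (Fin.natAdd q 1) fun y hy => ?_
  induction y using Fin.addCases with
  | left j =>
    have hne : ∀ c : Fin 2, Fin.castAdd 2 j ≠ Fin.natAdd q c := fun c h => by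
      have := congrArg Fin.val h
      simp at this
      omega
    simp [hτ, hτ', swap_apply_of_ne_of_ne (hne 0) (hne 1)]
  | right j =>
    fin_cases j
    · simp [hτ, hτ', ha]
    · exact absurd rfl hy

/-- A cycle of simplices around a codimension-2 face: `t r` lists the vertices of the face in
the simplex `i r`, which is left through its facet opposite to `k r` into the simplex
`i (r + 1)`, where that facet is the one opposite to `l (r + 1)`. -/
structure GlueingDatum.FaceCycle {q : ℕ} (D : GlueingDatum (q + 1)) (m : ℕ) where
  i : ℕ → D.I
  t : ℕ → Fin q → Fin (q + 2)
  k : ℕ → Fin (q + 2)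
  l : ℕ → Fin (q + 2)
  one_le : 1 ≤ m
  t_injective : ∀ r, r ≤ m → Injective (t r)
  k_notMem : ∀ r, r < m → k r ∉ Set.range (t r)
  P_eq : ∀ r, r < m → D.P (i r, k r) = (i (r + 1), l (r + 1))
  t_succ : ∀ r, r < m → t (r + 1) = ⇑(D.glue (i r, k r)) ∘ t r
  k_ne_l : ∀ r, 0 < r → r < m → k r ≠ l r
  i_last : i m = i 0
  range_t_last : Set.range (t m) = Set.range (t 0)
  l_last_ne : l m ≠ k 0

namespace GlueingDatum.FaceCycle

variable {q m : ℕ} {D : GlueingDatum (q + 1)} (c : D.FaceCycle m)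

/- The two vertices of `i r` off the face are `exit r`, opposite to the facet through which the
cycle leaves `i r`, and `entry r`, opposite to the one through which it enters; closing up the
cycle, `exit m = k 0` and `entry 0 = l m`. -/
def exit : ℕ → Fin (q + 2) := update c.k m (c.k 0)

def entry : ℕ → Fin (q + 2) := update c.l 0 (c.l m)

theorem exit_of_lt {r : ℕ} (hr : r < m) : c.exit r = c.k r :=
  update_of_ne hr.ne _ _

theorem entry_zero : c.entry 0 = c.l m :=
  update_self ..

theorem entry_succ (r : ℕ) : c.entry (r + 1) = c.l (r + 1) :=
  update_of_ne r.succ_ne_zero _ _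

theorem exit_last : c.exit m = c.exit 0 := by
  simp [exit, update_apply]

theorem entry_last : c.entry m = c.entry 0 := by
  simp [entry, update_apply]

theorem glue_k {r : ℕ} (hr : r < m) : D.glue (c.i r, c.k r) (c.k r) = c.l (r + 1) := by
  simpa [c.P_eq r hr] using D.glue_face (c.i r, c.k r)

theorem l_succ_notMem {r : ℕ} (hr : r < m) : c.l (r + 1) ∉ Set.range (c.t (r + 1)) := by
  rintro ⟨x, hx⟩
  rw [c.t_succ r hr, comp_apply, ← c.glue_k hr] at hx
  exact c.k_notMem r hr ⟨x, (D.glue _).injective hx⟩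

theorem exit_notMem {r : ℕ} (hr : r ≤ m) : c.exit r ∉ Set.range (c.t r) := by
  rcases hr.lt_or_eq with hr | rfl
  · rw [c.exit_of_lt hr]
    exact c.k_notMem r hr
  · rw [c.exit_last, c.range_t_last]
    exact c.exit_of_lt c.one_le ▸ c.k_notMem 0 c.one_le

theorem entry_notMem {r : ℕ} (hr : r ≤ m) : c.entry r ∉ Set.range (c.t r) := by
  rcases r with _ | r
  · have h := c.l_succ_notMem (r := m - 1) (by have := c.one_le; omega)
    rwa [Nat.sub_add_cancel c.one_le, c.range_t_last, ← c.entry_zero] at h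
  · rw [c.entry_succ]
    exact c.l_succ_notMem hr

theorem exit_ne_entry {r : ℕ} (hr : r ≤ m) : c.exit r ≠ c.entry r := by
  have h0 : c.exit 0 ≠ c.entry 0 := by
    rw [c.exit_of_lt c.one_le, c.entry_zero]
    exact c.l_last_ne.symm
  rcases hr.lt_or_eq with hr | rfl
  · rcases r with _ | r
    · exact h0
    · rw [c.exit_of_lt hr, c.entry_succ]
      exact c.k_ne_l _ r.succ_pos hr
  · rwa [c.exit_last, c.entry_last]

def frame (r : ℕ) (hr : r ≤ m) : Perm (Fin (q + 2)) :=
  Equiv.ofBijective (Fin.append (c.t r) ![c.exit r, c.entry r])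
    (Fin.append_pair_injective (c.t_injective r hr) (c.exit_notMem hr) (c.entry_notMem hr)
      (c.exit_ne_entry hr)).bijective_of_finite

theorem coe_frame (r : ℕ) (hr : r ≤ m) :
    ⇑(c.frame r hr) = Fin.append (c.t r) ![c.exit r, c.entry r] :=
  rfl

theorem glue_mul_frame {r : ℕ} (hr : r < m) :
    D.glue (c.i r, c.k r) * c.frame r hr.le
      = c.frame (r + 1) hr * Equiv.swap (Fin.natAdd q 0) (Fin.natAdd q 1) :=
  mul_eq_mul_swap_of_coe_eq_append (c.coe_frame r hr.le)
    (by rw [c.coe_frame, c.t_succ r hr])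
    (by rw [c.exit_of_lt hr, c.entry_succ, c.glue_k hr])

variable {ε : D.I → ℤˣ}

theorem sign_frame (hε : ∀ f, Perm.sign (D.glue f) = -(ε f.1 * ε (D.P f).1))
    (r : ℕ) (hr : r ≤ m) :
    ε (c.i r) * Perm.sign (c.frame r hr) = ε (c.i 0) * Perm.sign (c.frame 0 m.zero_le) := by
  induction r with
  | zero => rfl
  | succ r ih =>
    replace hr : r < m := hr
    have h := congrArg Perm.sign (c.glue_mul_frame hr)
    rw [map_mul, map_mul, hε, c.P_eq r hr, Perm.sign_swap (by simp)] at h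
    rw [← ih hr.le]
    have := Int.units_mul_self (ε (c.i (r + 1)))
    rw [Units.ext_iff] at h this ⊢
    push_cast at h this ⊢
    grind

theorem sign_frame_last (hε : ∀ f, Perm.sign (D.glue f) = -(ε f.1 * ε (D.P f).1)) :
    Perm.sign (c.frame m le_rfl) = Perm.sign (c.frame 0 m.zero_le) := by
  have h := c.sign_frame hε m le_rfl
  rw [c.i_last] at h
  exact mul_left_cancel h

theorem sign_eq_one_of_t_last_eq (hε : ∀ f, Perm.sign (D.glue f) = -(ε f.1 * ε (D.P f).1))
    {σ : Perm (Fin q)} (hσ : c.t m = c.t 0 ∘ σ) : Perm.sign σ = 1 := by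
  have h := sign_eq_sign_mul_sign_of_coe_eq_append (c.coe_frame 0 m.zero_le)
    (by rw [c.coe_frame, hσ, c.exit_last, c.entry_last] : ⇑(c.frame m le_rfl) = _)
  rwa [c.sign_frame_last hε, left_eq_mul] at h

end GlueingDatum.FaceCycle

/-- First assertion of Proposition '4-dim orientation': if condition Ori holds, then for
every cycle around a triangle (a sequence of 4-simplices cyclically arranged around a
2-dimensional face, followed through the face-pairings), the return permutation
`t₀⁻¹ ∘ t_m` of the three vertices of the triangle is even. -/
theorem ori_implies_cycl_even (D : GlueingDatum 4) (h : Ori D)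
    (m : ℕ) (hm : 1 ≤ m) (i : ℕ → D.I) (t : ℕ → Fin 3 → Fin 5) (k l : ℕ → Fin 5)
    (ht : ∀ r, r ≤ m → Function.Injective (t r))
    (hk : ∀ r, r < m → k r ∉ Set.range (t r))
    (hP : ∀ r, r < m → D.P (i r, k r) = (i (r + 1), l (r + 1)))
    (hstep : ∀ r, r < m → t (r + 1) = ⇑(D.glue (i r, k r)) ∘ t r)
    (hkl : ∀ r, 0 < r → r < m → k r ≠ l r)
    (hi : i m = i 0) (hrange : Set.range (t m) = Set.range (t 0))
    (hlk : l m ≠ k 0) :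
    ∃ σ : Equiv.Perm (Fin 3), Equiv.Perm.sign σ = 1 ∧ t m = t 0 ∘ ⇑σ := by
  obtain ⟨ε, hε⟩ := h.exists_sign_glue
  let c : D.FaceCycle m := ⟨i, t, k, l, hm, ht, hk, hP, hstep, hkl, hi, hrange, hlk⟩
  obtain ⟨σ, hσ⟩ := exists_perm_eq_comp_of_range_eq (ht m le_rfl) (ht 0 m.zero_le) hrange
  exact ⟨σ, c.sign_eq_one_of_t_last_eq hε hσ, hσ⟩
end
end
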